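/- Let w(a) = c > 3 for all a ∈ A and w(b) = 1 for all b ∈ B, and let M1, M2 be two popular matchings. Then every path component P of M1 △ M2 has one endpoint in A and the other endpoint in B. -/

import Mathlib

structure PMInstance (V : Type) [Fintype V] [DecidableEq V] where
  A : Finset V
  E : V → V → Prop
  Esymm : ∀ u v : V, E u v → E v u
  loopless : ∀ v : V, ¬ E v v
  bipartite : ∀ u v : V, E u v → (u ∈ A ↔ v ∉ A)
  pref : V → V → V → Prop
  pref_irrefl : ∀ v u : V, ¬ pref v u u
  pref_trans : ∀ v u z t : V, pref v u z → pref v z t → pref v u t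
  pref_asymm : ∀ v u z : V, pref v u z → ¬ pref v z u
  pref_total : ∀ v u z : V, E v u → E v z → u ≠ z → pref v u z ∨ pref v z u
  w : V → ℚ
  w_nonneg : ∀ v : V, 0 ≤ w v

structure Matching (V : Type) [Fintype V] [DecidableEq V] (E : V → V → Prop) where
  m : V → Option V
  msymm : ∀ u v : V, m u = some v ↔ m v = some u
  valid : ∀ u v : V, m u = some v → E u v

attribute [local instance] Classical.propDecidable

variable {V : Type} [Fintype V] [DecidableEq V]

/-- Vertex `v` prefers matching `M` to matching `M'`. -/
def prefersVx (I : PMInstance V) (M M' : Matching V I.E) (v : V) : Prop :=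
  (M'.m v = none ∧ M.m v ≠ none) ∨
    (∃ u u' : V, M.m v = some u ∧ M'.m v = some u' ∧ I.pref v u u')

/-- Total weight of the vertices preferring `M` to `M'`. -/
noncomputable def weightPref (I : PMInstance V) (M M' : Matching V I.E) : ℚ :=
  ∑ v : V, if prefersVx I M M' v then I.w v else 0

/-- A matching is popular if it never loses a weighted head-to-head comparison. -/
def popular (I : PMInstance V) (M : Matching V I.E) : Prop :=
  ∀ M' : Matching V I.E, weightPref I M' M ≤ weightPref I M M'

/-- Edge relation of the symmetric difference of two matchings. -/
def symmDiffRel {E : V → V → Prop} (M₁ M₂ : Matching V E) (u v : V) : Prop :=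
  (M₁.m u = some v ∧ M₂.m u ≠ some v) ∨ (M₂.m u = some v ∧ M₁.m u ≠ some v)

/-- `v` is an endpoint (degree-one vertex) of a path component of `M₁ △ M₂`. -/
def endpointOf {E : V → V → Prop} (M₁ M₂ : Matching V E) (v : V) : Prop :=
  ((∃ z, M₁.m v = some z ∧ symmDiffRel M₁ M₂ v z) ∧
      ¬ ∃ z, M₂.m v = some z ∧ symmDiffRel M₁ M₂ v z) ∨
    ((∃ z, M₂.m v = some z ∧ symmDiffRel M₁ M₂ v z) ∧
      ¬ ∃ z, M₁.m v = some z ∧ symmDiffRel M₁ M₂ v z)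

/-!
Let `x 0, …, x N` be the alternating path from `u` to `v` in `M₁ △ M₂`, with `x 0` unmatched
in `M₂`. If `N` is odd, bipartiteness puts its ends on opposite sides. If `N` is even, switching
`M₁` or `M₂` along a prefix or a suffix of the path gives a matching that, by popularity, does
not beat the original one; each such comparison bounds a partial sum `Q m` of the interior votes
`±w (x k)` (for `M₂` against `M₁`). Together they force `Q 1 = Q N = 0` and `0 ≤ Q m ≤ c + 1`.
Since the weights along the path alternate between `c` and `1`, with `c > 2`, such a bounded
walk can never be back at `0` at an even time.
-/

open Finset

noncomputable def vote (I : PMInstance V) (M M' : Matching V I.E) (z : V) : ℚ :=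
  (if prefersVx I M M' z then I.w z else 0) - (if prefersVx I M' M z then I.w z else 0)

section Vote

variable {I : PMInstance V} {M M' : Matching V I.E} {z y y' : V}

theorem vote_swap : vote I M' M z = -vote I M M' z := by
  unfold vote; ring

theorem vote_congr {N N' : Matching V I.E} (h : M.m z = N.m z) (h' : M'.m z = N'.m z) :
    vote I M M' z = vote I N N' z := by
  unfold vote prefersVx
  rw [h, h']

theorem vote_eq_zero (h : M.m z = M'.m z) : vote I M M' z = 0 := by
  rw [vote_congr rfl h.symm, vote, sub_self]

theorem vote_of_none_of_some (h : M.m z = none) (h' : M'.m z = some y) :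
    vote I M M' z = -I.w z := by
  simp [vote, prefersVx, h, h']

theorem vote_of_some_of_none (h : M.m z = some y) (h' : M'.m z = none) :
    vote I M M' z = I.w z := by
  rw [← neg_neg (vote I M M' z), ← vote_swap, vote_of_none_of_some h' h, neg_neg]

theorem vote_of_some_of_some (h : M.m z = some y) (h' : M'.m z = some y') (hne : y ≠ y') :
    vote I M M' z = I.w z ∨ vote I M M' z = -I.w z := by
  rcases I.pref_total z y y' (M.valid z y h) (M'.valid z y' h') hne with hp | hp
  · left; simp [vote, prefersVx, h, h', hp, I.pref_asymm z y y' hp]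
  · right; simp [vote, prefersVx, h, h', hp, I.pref_asymm z y' y hp]

theorem sub_weightPref_eq_sum_vote :
    weightPref I M M' - weightPref I M' M = ∑ z, vote I M M' z := by
  simp only [weightPref, vote, sum_sub_distrib]

theorem sum_vote_nonpos_of_popular (hM' : popular I M') {S : Finset V}
    (hoff : ∀ z ∉ S, M.m z = M'.m z) : ∑ z ∈ S, vote I M M' z ≤ 0 := by
  rw [sum_subset (subset_univ S) fun z _ hz => vote_eq_zero (hoff z hz),
    ← sub_weightPref_eq_sum_vote]
  exact sub_nonpos.2 (hM' M)

end Vote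

namespace Matching

variable {E : V → V → Prop}

def switch (M M' : Matching V E) (S : Finset V) (hS : ∀ u ∈ S, ∀ v, M.m u = some v → v ∈ S) :
    Matching V E where
  m z := if z ∈ S then (M'.m z).filter (· ∈ S) else M.m z
  msymm u v := by
    by_cases hu : u ∈ S <;> by_cases hv : v ∈ S <;>
      simp [hu, hv, Option.filter_eq_some_iff, M'.msymm u v, M.msymm u v]
    · exact fun h => hv (hS u hu v ((M.msymm u v).2 h))
    · exact fun h => hu (hS v hv u h)
  valid u v h := by
    split_ifs at h
    · exact M'.valid u v (Option.filter_eq_some_iff.1 h).1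
    · exact M.valid u v h

variable {M M' : Matching V E} {S : Finset V} {hS : ∀ u ∈ S, ∀ v, M.m u = some v → v ∈ S}
  {z : V}

theorem switch_m_of_not_mem (hz : z ∉ S) : (M.switch M' S hS).m z = M.m z := if_neg hz

theorem switch_m_of_forall_mem (hz : z ∈ S) (h : ∀ v, M'.m z = some v → v ∈ S) :
    (M.switch M' S hS).m z = M'.m z := by
  simp only [switch, if_pos hz]
  cases hm : M'.m z with
  | none => rfl
  | some v => simp [h v hm]

theorem switch_m_of_forall_not_mem (hz : z ∈ S) (h : ∀ v, M'.m z = some v → v ∉ S) :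
    (M.switch M' S hS).m z = none := by
  simp only [switch, if_pos hz]
  cases hm : M'.m z with
  | none => rfl
  | some v => simp [h v hm]

end Matching

theorem sum_image_range_succ_eq {α β : Type*} [DecidableEq α] [AddCommMonoid β] {f : α → β}
    {x : ℕ → α} {j : ℕ} (hinj : Set.InjOn x {i | i ≤ j}) (hj : 0 < j) :
    ∑ z ∈ (range (j + 1)).image x, f z = f (x 0) + ∑ k ∈ Ico 1 j, f (x k) + f (x j) := by
  rw [sum_image fun a ha b hb => hinj (by simpa [Nat.lt_succ_iff] using ha)
    (by simpa [Nat.lt_succ_iff] using hb), sum_range_succ, range_eq_Ico,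
    sum_eq_sum_Ico_succ_bot hj]

section SymmDiff

variable {I : PMInstance V} {M₁ M₂ : Matching V I.E} {a b : V}

theorem symmDiffRel_comm : symmDiffRel M₁ M₂ a b ↔ symmDiffRel M₁ M₂ b a := by
  simp only [symmDiffRel, ne_eq, M₁.msymm a b, M₂.msymm a b]

theorem symmDiffRel.ne (h : symmDiffRel M₁ M₂ a b) : a ≠ b := by
  rintro rfl
  rcases h with ⟨h, -⟩ | ⟨h, -⟩
  · exact I.loopless a (M₁.valid a a h)
  · exact I.loopless a (M₂.valid a a h)

theorem endpointOf.eq_none_or (h : endpointOf M₁ M₂ a) : M₁.m a = none ∨ M₂.m a = none := by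
  unfold endpointOf symmDiffRel at h
  cases h₁ : M₁.m a <;> cases h₂ : M₂.m a <;> simp_all [eq_comm]

end SymmDiff

structure IsAltPath {E : V → V → Prop} (M₁ M₂ : Matching V E) (x : ℕ → V) (N : ℕ) : Prop where
  injOn : Set.InjOn x {i | i ≤ N}
  start : M₂.m (x 0) = none
  edge_even : ∀ i < N, Even i → M₁.m (x i) = some (x (i + 1))
  edge_odd : ∀ i < N, Odd i → M₂.m (x i) = some (x (i + 1))

namespace IsAltPath

variable {E : V → V → Prop} {M₁ M₂ : Matching V E} {x : ℕ → V} {N : ℕ}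

theorem of_symmDiffRel (hinj : Set.InjOn x {i | i ≤ N}) (h0 : M₂.m (x 0) = none)
    (hrel : ∀ i < N, symmDiffRel M₁ M₂ (x i) (x (i + 1))) : IsAltPath M₁ M₂ x N := by
  have back : ∀ (M : Matching V E) i, i + 1 < N → M.m (x i) = some (x (i + 1)) →
      M.m (x (i + 1)) ≠ some (x (i + 2)) := by
    intro M i hi h h'
    rw [(M.msymm _ _).1 h] at h'
    have := hinj (by simp; omega) (by simp; omega) (Option.some_injective _ h')
    omega
  have key : ∀ i < N, (Even i → M₁.m (x i) = some (x (i + 1))) ∧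
      (Odd i → M₂.m (x i) = some (x (i + 1))) := by
    intro i
    induction i with
    | zero =>
      intro hN
      refine ⟨fun _ => ?_, fun h => absurd h (by simp)⟩
      rcases hrel 0 hN with ⟨h, -⟩ | ⟨h, -⟩
      · exact h
      · simp [h0] at h
    | succ i ih =>
      intro hi
      obtain ⟨ih₁, ih₂⟩ := ih (by omega)
      rcases Nat.even_or_odd i with he | ho
      · refine ⟨fun h => absurd h (Nat.not_even_iff_odd.2 he.add_one), fun _ => ?_⟩
        rcases hrel (i + 1) hi with ⟨h, -⟩ | ⟨h, -⟩
        · exact absurd h (back M₁ i hi (ih₁ he))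
        · exact h
      · refine ⟨fun _ => ?_, fun h => absurd h (Nat.not_odd_iff_even.2 ho.add_one)⟩
        rcases hrel (i + 1) hi with ⟨h, -⟩ | ⟨h, -⟩
        · exact h
        · exact absurd h (back M₂ i hi (ih₂ ho))
  exact ⟨hinj, h0, fun i hi => (key i hi).1, fun i hi => (key i hi).2⟩

theorem adj (hx : IsAltPath M₁ M₂ x N) : ∀ i < N, E (x i) (x (i + 1)) := by
  intro i hi
  rcases Nat.even_or_odd i with he | ho
  · exact M₁.valid _ _ (hx.edge_even i hi he)
  · exact M₂.valid _ _ (hx.edge_odd i hi ho)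

theorem m₁_of_odd (hx : IsAltPath M₁ M₂ x N) {k : ℕ} (hk : k ≤ N) (ho : Odd k) :
    M₁.m (x k) = some (x (k - 1)) := by
  obtain ⟨r, rfl⟩ := ho
  simpa using (M₁.msymm _ _).1 (hx.edge_even (2 * r) (by omega) (even_two_mul r))

theorem m₂_of_even (hx : IsAltPath M₁ M₂ x N) {k : ℕ} (hk : k ≤ N) (he : Even k) (h0 : k ≠ 0) :
    M₂.m (x k) = some (x (k - 1)) := by
  obtain ⟨r, rfl⟩ := he
  have := (M₂.msymm _ _).1 (hx.edge_odd (r + r - 1) (by omega) ⟨r - 1, by omega⟩)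
  rwa [show r + r - 1 + 1 = r + r by omega] at this

theorem mem_window_iff (hx : IsAltPath M₁ M₂ x N) {i j : ℕ} (hi : i ≤ N) (hj : j ≤ N) :
    x i ∈ (range (j + 1)).image x ↔ i ≤ j := by
  simp only [mem_image, mem_range]
  constructor
  · rintro ⟨k, hk, hxk⟩
    have := hx.injOn (by simp; omega) (by simpa using hi) hxk
    omega
  · exact fun h => ⟨i, by omega, rfl⟩

theorem m₁_mem_window (hx : IsAltPath M₁ M₂ x N) {j k : ℕ} (hj : j ≤ N) (hk : k ≤ j)
    (hkj : Even k → k < j) {v : V} (hv : M₁.m (x k) = some v) :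
    v ∈ (range (j + 1)).image x := by
  rcases Nat.even_or_odd k with he | ho
  · have hkj := hkj he
    rw [hx.edge_even k (by omega) he, Option.some_inj] at hv
    exact hv ▸ mem_image_of_mem x (mem_range.2 (by omega))
  · rw [hx.m₁_of_odd (by omega) ho, Option.some_inj] at hv
    exact hv ▸ mem_image_of_mem x (mem_range.2 (by omega))

theorem m₂_mem_window (hx : IsAltPath M₁ M₂ x N) {j k : ℕ} (hj : j ≤ N) (hk : k ≤ j)
    (hkj : Odd k → k < j) {v : V} (hv : M₂.m (x k) = some v) :
    v ∈ (range (j + 1)).image x := by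
  rcases Nat.even_or_odd k with he | ho
  · rcases Nat.eq_zero_or_pos k with rfl | hk0
    · simp [hx.start] at hv
    rw [hx.m₂_of_even (by omega) he hk0.ne', Option.some_inj] at hv
    exact hv ▸ mem_image_of_mem x (mem_range.2 (by omega))
  · have hkj := hkj ho
    rw [hx.edge_odd k (by omega) ho, Option.some_inj] at hv
    exact hv ▸ mem_image_of_mem x (mem_range.2 (by omega))

theorem reverse (hx : IsAltPath M₁ M₂ x N) (hN : Even N) (hend : M₁.m (x N) = none) :
    IsAltPath M₂ M₁ (fun i => x (N - i)) N where
  injOn i hi k hk h := by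
    have := hx.injOn (by simp) (by simp) h
    simp only [Set.mem_ofPred_eq] at hi hk
    omega
  start := by simpa using hend
  edge_even i hi he := by
    rw [hx.m₂_of_even (by omega) (hN.tsub he) (by omega), Nat.sub_sub]
  edge_odd i hi ho := by
    rw [hx.m₁_of_odd (by omega) (Nat.Even.sub_odd hi.le hN ho), Nat.sub_sub]

end IsAltPath

theorem exists_isAltPath_of_reflTransGen {I : PMInstance V} {M₁ M₂ : Matching V I.E} {u v : V}
    (hu : M₂.m u = none) (huv : Relation.ReflTransGen (symmDiffRel M₁ M₂) u v) :
    ∃ (N : ℕ) (x : ℕ → V), x 0 = u ∧ x N = v ∧ IsAltPath M₁ M₂ x N := by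
  let G := SimpleGraph.fromRel (symmDiffRel M₁ M₂)
  obtain ⟨p⟩ : G.Reachable u v := (SimpleGraph.reachable_iff_reflTransGen u v).2 <|
    Relation.ReflTransGen.mono (fun a b h => (SimpleGraph.fromRel_adj _ a b).2 ⟨h.ne, Or.inl h⟩)
      u v huv
  refine ⟨p.bypass.length, p.bypass.getVert, p.bypass.getVert_zero, p.bypass.getVert_length,
    .of_symmDiffRel p.bypass_isPath.getVert_injOn (by rwa [p.bypass.getVert_zero]) fun i hi => ?_⟩
  obtain ⟨-, h | h⟩ := (SimpleGraph.fromRel_adj _ _ _).1 (p.bypass.adj_getVert_succ hi)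
  exacts [h, symmDiffRel_comm.1 h]

noncomputable def pathVote (I : PMInstance V) (M₁ M₂ : Matching V I.E) (x : ℕ → V) (m : ℕ) : ℚ :=
  ∑ k ∈ Ico 1 m, vote I M₂ M₁ (x k)

theorem pathVote_reverse {I : PMInstance V} {M₁ M₂ : Matching V I.E} (x : ℕ → V) {N j : ℕ}
    (hj0 : 0 < j) (hjN : j ≤ N) :
    pathVote I M₂ M₁ (fun i => x (N - i)) j =
      pathVote I M₁ M₂ x (N + 1 - j) - pathVote I M₁ M₂ x N := by
  simp only [pathVote, vote_swap (M := M₂) (M' := M₁), sum_neg_distrib]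
  rw [sum_Ico_reflect (fun k => vote I M₂ M₁ (x k)) 1 (by omega : j ≤ N + 1),
    ← sum_Ico_consecutive _ (by omega : 1 ≤ N + 1 - j) (by omega : N + 1 - j ≤ N),
    Nat.add_sub_cancel]
  ring

namespace IsAltPath

variable {I : PMInstance V} {M₁ M₂ : Matching V I.E} {x : ℕ → V} {N : ℕ}

theorem vote_interior (hx : IsAltPath M₁ M₂ x N) {k : ℕ} (hk0 : 0 < k) (hk : k < N) :
    vote I M₂ M₁ (x k) = I.w (x k) ∨ vote I M₂ M₁ (x k) = -I.w (x k) := by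
  have hne : x (k - 1) ≠ x (k + 1) := fun h => by
    have := hx.injOn (by simp; omega) (by simp; omega) h
    omega
  rcases Nat.even_or_odd k with he | ho
  · exact vote_of_some_of_some (hx.m₂_of_even hk.le he hk0.ne') (hx.edge_even k hk he) hne
  · exact vote_of_some_of_some (hx.edge_odd k hk ho) (hx.m₁_of_odd hk.le ho) hne.symm

/-- The competitor switches from `M₁` to `M₂` along `x 0, …, x j`, unmatching both ends. -/
theorem pathVote_le_of_popular₁ (hx : IsAltPath M₁ M₂ x N) (h₁ : popular I M₁) {j : ℕ}
    (hj : Odd j) (hjN : j < N) :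
    pathVote I M₁ M₂ x j ≤ I.w (x 0) + I.w (x j) := by
  set S := (range (j + 1)).image x
  have hmem : ∀ {k}, k ≤ j → x k ∈ S := fun hk => mem_image_of_mem x (mem_range.2 (by omega))
  have hS : ∀ u ∈ S, ∀ v, M₁.m u = some v → v ∈ S := by
    rintro _ hu v hv
    obtain ⟨k, hk, rfl⟩ := mem_image.1 hu
    rw [mem_range] at hk
    refine hx.m₁_mem_window hjN.le (by omega) (fun he => ?_) hv
    have : k ≠ j := by rintro rfl; exact Nat.not_even_iff_odd.2 hj he
    omega
  have key := sum_vote_nonpos_of_popular h₁ fun z hz =>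
    Matching.switch_m_of_not_mem (M' := M₂) (hS := hS) hz
  rw [sum_image_range_succ_eq (hx.injOn.mono fun i (hi : i ≤ j) => show i ≤ N by omega) hj.pos]
    at key
  have hfirst : vote I (M₁.switch M₂ S hS) M₁ (x 0) = -I.w (x 0) :=
    vote_of_none_of_some (Matching.switch_m_of_forall_not_mem (hmem (Nat.zero_le _))
      (by simp [hx.start])) (hx.edge_even 0 (by omega) Even.zero)
  have hlast : vote I (M₁.switch M₂ S hS) M₁ (x j) = -I.w (x j) := by
    refine vote_of_none_of_some (Matching.switch_m_of_forall_not_mem (hmem le_rfl) ?_)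
      (hx.m₁_of_odd hjN.le hj)
    intro v hv
    rw [hx.edge_odd j hjN hj, Option.some_inj] at hv
    rw [← hv, hx.mem_window_iff hjN hjN.le]
    omega
  have hinterior : ∀ k ∈ Ico 1 j, vote I (M₁.switch M₂ S hS) M₁ (x k) = vote I M₂ M₁ (x k) := by
    intro k hk
    rw [mem_Ico] at hk
    exact vote_congr (Matching.switch_m_of_forall_mem (hmem hk.2.le)
      fun v => hx.m₂_mem_window hjN.le hk.2.le fun _ => hk.2) rfl
  rw [hfirst, hlast, sum_congr rfl hinterior] at key
  rw [pathVote]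
  linarith

/-- The competitor switches from `M₂` to `M₁` along `x 0, …, x j`: it matches the free end
`x 0` and unmatches `x j`. -/
theorem le_pathVote_of_popular₂ (hx : IsAltPath M₁ M₂ x N) (h₂ : popular I M₂)
    (hend : M₁.m (x N) = none) {j : ℕ} (hj : Even j) (hj0 : 0 < j) (hjN : j ≤ N) :
    I.w (x 0) ≤ pathVote I M₁ M₂ x j + I.w (x j) := by
  set S := (range (j + 1)).image x
  have hmem : ∀ {k}, k ≤ j → x k ∈ S := fun hk => mem_image_of_mem x (mem_range.2 (by omega))
  have hS : ∀ u ∈ S, ∀ v, M₂.m u = some v → v ∈ S := by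
    rintro _ hu v hv
    obtain ⟨k, hk, rfl⟩ := mem_image.1 hu
    rw [mem_range] at hk
    refine hx.m₂_mem_window hjN (by omega) (fun ho => ?_) hv
    have : k ≠ j := by rintro rfl; exact Nat.not_even_iff_odd.2 ho hj
    omega
  have key := sum_vote_nonpos_of_popular h₂ fun z hz =>
    Matching.switch_m_of_not_mem (M' := M₁) (hS := hS) hz
  rw [sum_image_range_succ_eq (hx.injOn.mono fun i (hi : i ≤ j) => show i ≤ N by omega) hj0] at key
  have hfirst : vote I (M₂.switch M₁ S hS) M₂ (x 0) = I.w (x 0) := by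
    have h01 := hx.edge_even 0 (by omega) Even.zero
    refine vote_of_some_of_none (y := x 1) ?_ hx.start
    rw [Matching.switch_m_of_forall_mem (hmem (Nat.zero_le _)), h01]
    intro v hv
    rw [h01, Option.some_inj] at hv
    exact hv ▸ hmem hj0
  have hlast : vote I (M₂.switch M₁ S hS) M₂ (x j) = -I.w (x j) := by
    refine vote_of_none_of_some (Matching.switch_m_of_forall_not_mem (hmem le_rfl) ?_)
      (hx.m₂_of_even hjN hj hj0.ne')
    intro v hv
    rcases hjN.lt_or_eq with hjN | rfl
    · rw [hx.edge_even j hjN hj, Option.some_inj] at hv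
      rw [← hv, hx.mem_window_iff hjN hjN.le]
      omega
    · simp [hend] at hv
  have hinterior : ∀ k ∈ Ico 1 j, vote I (M₂.switch M₁ S hS) M₂ (x k) = -vote I M₂ M₁ (x k) := by
    intro k hk
    rw [mem_Ico] at hk
    rw [← vote_swap]
    exact vote_congr (Matching.switch_m_of_forall_mem (hmem hk.2.le)
      fun v => hx.m₁_mem_window hjN hk.2.le fun _ => hk.2) rfl
  rw [hfirst, hlast, sum_congr rfl hinterior, sum_neg_distrib] at key
  rw [pathVote]
  linarith

theorem pathVote_bounds (hx : IsAltPath M₁ M₂ x N) (h₁ : popular I M₁) (h₂ : popular I M₂)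
    (hN : Even N) (hN0 : 0 < N) (hend : M₁.m (x N) = none) {W : ℚ}
    (hwe : ∀ i ≤ N, Even i → I.w (x i) = I.w (x 0))
    (hwo : ∀ i ≤ N, Odd i → I.w (x 0) + I.w (x i) = W) :
    pathVote I M₁ M₂ x N = 0 ∧
      ∀ m, 1 ≤ m → m ≤ N → 0 ≤ pathVote I M₁ M₂ x m ∧ pathVote I M₁ M₂ x m ≤ W := by
  have hrev := hx.reverse hN hend
  set Q := pathVote I M₁ M₂ x
  have hQ1 : Q 1 = 0 := by simp [Q, pathVote]
  have hup_odd : ∀ j, Odd j → j < N → Q j ≤ W := fun j hj hjN =>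
    (hx.pathVote_le_of_popular₁ h₁ hj hjN).trans (hwo j hjN.le hj).le
  have hlow_even : ∀ j, Even j → 0 < j → j ≤ N → 0 ≤ Q j := fun j hj hj0 hjN => by
    have := hx.le_pathVote_of_popular₂ h₂ hend hj hj0 hjN
    rw [hwe j hjN hj] at this
    linarith
  -- along the reversed path, the same two bounds concern the suffixes
  have hup_even : ∀ j, Odd j → j < N → Q (N + 1 - j) - Q N ≤ W := fun j hj hjN => by
    have := hrev.pathVote_le_of_popular₁ h₂ hj hjN
    rw [pathVote_reverse x hj.pos hjN.le, Nat.sub_zero, hwe N le_rfl hN] at this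
    linarith [hwo (N - j) (by omega) (Nat.Even.sub_odd hjN.le hN hj)]
  have hlow_odd : ∀ j, Even j → 0 < j → j ≤ N → Q N ≤ Q (N + 1 - j) := fun j hj hj0 hjN => by
    have := hrev.le_pathVote_of_popular₂ h₁ (by simpa using hx.start) hj hj0 hjN
    rw [pathVote_reverse x hj0 hjN, Nat.sub_zero, hwe N le_rfl hN,
      hwe (N - j) (by omega) (hN.tsub hj)] at this
    linarith
  have hQN : Q N = 0 :=
    le_antisymm (by simpa [hQ1] using hlow_odd N hN hN0 le_rfl) (hlow_even N hN hN0 le_rfl)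
  refine ⟨hQN, fun m hm1 hmN => ?_⟩
  rcases Nat.even_or_odd m with hm | hm
  · have := hup_even (N + 1 - m) (by rw [Nat.sub_add_comm hmN]; exact (hN.tsub hm).add_one)
      (by obtain ⟨r, rfl⟩ := hm; omega)
    rw [show N + 1 - (N + 1 - m) = m by omega, hQN] at this
    exact ⟨hlow_even m hm (by omega) hmN, by linarith⟩
  · have hmN' : m < N := lt_of_le_of_ne hmN (by rintro rfl; exact Nat.not_even_iff_odd.2 hm hN)
    have hm' : Even (N + 1 - m) := by
      rw [Nat.sub_add_comm hmN]; exact (Nat.Even.sub_odd hmN hN hm).add_one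
    have := hlow_odd (N + 1 - m) hm' (by omega) (by omega)
    rw [show N + 1 - (N + 1 - m) = m by omega, hQN] at this
    exact ⟨this, hup_odd m hm hmN'⟩

end IsAltPath

theorem PMInstance.mem_A_iff_of_path (I : PMInstance V) {x : ℕ → V} {N : ℕ}
    (hE : ∀ i < N, I.E (x i) (x (i + 1))) : ∀ i ≤ N, (x i ∈ I.A ↔ (Even i ↔ x 0 ∈ I.A)) := by
  intro i
  induction i with
  | zero => simp
  | succ i ih =>
    intro hi
    have := I.bipartite _ _ (hE i (by omega))
    have := ih (by omega)
    rw [Nat.even_add_one]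
    tauto

section Weights

variable {I : PMInstance V} {c : ℚ}

theorem weight_eq_ite (hA : ∀ a ∈ I.A, I.w a = c) (hB : ∀ b : V, b ∉ I.A → I.w b = 1)
    (v : V) : I.w v = if v ∈ I.A then c else 1 := by
  split_ifs with h
  exacts [hA v h, hB v h]

theorem weight_eq_of_mem_iff (hA : ∀ a ∈ I.A, I.w a = c) (hB : ∀ b : V, b ∉ I.A → I.w b = 1)
    {u v : V} (h : u ∈ I.A ↔ v ∈ I.A) : I.w u = I.w v := by
  rw [weight_eq_ite hA hB u, weight_eq_ite hA hB v, if_congr h rfl rfl]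

theorem weight_add_of_mem_iff_not_mem (hA : ∀ a ∈ I.A, I.w a = c)
    (hB : ∀ b : V, b ∉ I.A → I.w b = 1) {u v : V} (h : u ∈ I.A ↔ v ∉ I.A) :
    I.w u + I.w v = c + 1 := by
  by_cases hv : v ∈ I.A
  · rw [hA v hv, hB u (by tauto)]; ring
  · rw [hB v hv, hA u (h.2 hv)]

end Weights

/-- Odd times sit in `{0, c + 1}` and even times in `{1, c}`; a step from an even time that
leaves this pattern lands on `2` or `c - 1`, from where the next step leaves `[0, c + 1]`. -/
theorem bounded_walk_ne_zero_of_even {c : ℚ} (hc : 2 < c) {w S : ℕ → ℚ} {N : ℕ} (hN : Even N)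
    (hN0 : 0 < N) (hw : ∀ j < N, w j = 1 ∨ w j = c)
    (hw_add : ∀ j, j + 1 < N → w j + w (j + 1) = c + 1)
    (hstep : ∀ j, 1 ≤ j → j < N → S (j + 1) = S j + w j ∨ S (j + 1) = S j - w j)
    (hbound : ∀ j, 1 ≤ j → j ≤ N → 0 ≤ S j ∧ S j ≤ c + 1) (h1 : S 1 = 0) : S N ≠ 0 := by
  have key : ∀ j, 1 ≤ j → j ≤ N →
      (Odd j ∧ (S j = 0 ∨ S j = c + 1)) ∨ (Even j ∧ (S j = 1 ∨ S j = c)) := by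
    intro j hj
    induction j, hj using Nat.le_induction with
    | base => exact fun _ => Or.inl ⟨odd_one, Or.inl h1⟩
    | succ j hj ih =>
      intro hjN
      have hb := hbound (j + 1) (by omega) hjN
      rcases ih (by omega) with ⟨ho, hS⟩ | ⟨he, hS⟩
      · refine Or.inr ⟨ho.add_one, ?_⟩
        rcases hw j (by omega) with hwj | hwj <;> rcases hS with hS | hS <;>
          rcases hstep j hj (by omega) with h | h <;>
          first | (left; linarith) | (right; linarith)
      · refine Or.inl ⟨he.add_one, ?_⟩
        have hj2 : j + 2 ≤ N := by
          obtain ⟨a, rfl⟩ := hN; obtain ⟨b, rfl⟩ := he; omega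
        have hb' := hbound (j + 2) (by omega) hj2
        have hadd := hw_add j (by omega)
        rcases hw j (by omega) with hwj | hwj <;> rcases hS with hS | hS <;>
          rcases hstep j hj (by omega) with h | h <;>
          rcases hstep (j + 1) (by omega) (by omega) with h' | h' <;>
          first | (left; linarith) | (right; linarith)
  rcases key N (by omega) le_rfl with ⟨ho, -⟩ | ⟨-, h | h⟩
  · exact absurd hN (Nat.not_even_iff_odd.2 ho)
  all_goals rw [h]; linarith

theorem IsAltPath.not_even {I : PMInstance V} {M₁ M₂ : Matching V I.E} {x : ℕ → V} {N : ℕ}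
    {c : ℚ} (hc : 2 < c) (hA : ∀ a ∈ I.A, I.w a = c) (hB : ∀ b : V, b ∉ I.A → I.w b = 1)
    (h₁ : popular I M₁) (h₂ : popular I M₂) (hx : IsAltPath M₁ M₂ x N) (hN0 : 0 < N)
    (hend : M₁.m (x N) = none ∨ M₂.m (x N) = none) : ¬ Even N := by
  intro hN
  have hend₁ : M₁.m (x N) = none :=
    hend.resolve_right (by simp [hx.m₂_of_even le_rfl hN hN0.ne'])
  have hside := I.mem_A_iff_of_path hx.adj
  obtain ⟨hQN, hbound⟩ := hx.pathVote_bounds h₁ h₂ hN hN0 hend₁ (W := c + 1)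
    (fun i hi he => weight_eq_of_mem_iff hA hB (by simp [hside i hi, he]))
    (fun i hi ho => weight_add_of_mem_iff_not_mem hA hB
      (by simp [hside i hi, Nat.not_even_iff_odd.2 ho]))
  refine bounded_walk_ne_zero_of_even hc hN hN0 (w := fun k => I.w (x k))
    (fun j _ => by rw [weight_eq_ite hA hB]; split_ifs <;> simp)
    (fun j hj => weight_add_of_mem_iff_not_mem hA hB (I.bipartite _ _ (hx.adj j (by omega))))
    (fun j hj1 hjN => ?_) hbound (by simp [pathVote]) hQN
  rw [pathVote, pathVote, sum_Ico_succ_top hj1]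
  rcases hx.vote_interior hj1 hjN with h | h <;> rw [h]
  exacts [Or.inl rfl, Or.inr (sub_eq_add_neg _ _).symm]

theorem mem_A_iff_not_mem_of_reflTransGen {I : PMInstance V} {M₁ M₂ : Matching V I.E} {c : ℚ}
    (hc : 2 < c) (hA : ∀ a ∈ I.A, I.w a = c) (hB : ∀ b : V, b ∉ I.A → I.w b = 1)
    (h₁ : popular I M₁) (h₂ : popular I M₂) {u v : V} (hne : u ≠ v)
    (huv : Relation.ReflTransGen (symmDiffRel M₁ M₂) u v) (hu : M₂.m u = none)
    (hv : M₁.m v = none ∨ M₂.m v = none) : u ∈ I.A ↔ v ∉ I.A := by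
  obtain ⟨N, x, rfl, rfl, hx⟩ := exists_isAltPath_of_reflTransGen hu huv
  have hN0 : 0 < N := Nat.pos_of_ne_zero fun h => hne (by rw [h])
  have hodd := hx.not_even hc hA hB h₁ h₂ hN0 hv
  rw [I.mem_A_iff_of_path hx.adj N le_rfl]
  tauto

/-- Every path component of the symmetric difference of two popular matchings
has one endpoint in `A` and the other in `B` (for `w = c > 3` on `A`, `1` on `B`). -/
theorem path_endpoints_opposite_sides (I : PMInstance V) (c : ℚ) (hc : 3 < c)
    (hA : ∀ a ∈ I.A, I.w a = c) (hB : ∀ b : V, b ∉ I.A → I.w b = 1)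
    (M₁ M₂ : Matching V I.E) (h₁ : popular I M₁) (h₂ : popular I M₂) :
    ∀ u v : V, u ≠ v → Relation.ReflTransGen (symmDiffRel M₁ M₂) u v →
      endpointOf M₁ M₂ u → endpointOf M₁ M₂ v → (u ∈ I.A ↔ v ∉ I.A) := by
  intro u v hne huv hu hv
  have hc' : (2 : ℚ) < c := by linarith
  rcases hu.eq_none_or with hu | hu
  · exact mem_A_iff_not_mem_of_reflTransGen hc' hA hB h₂ h₁ hne
      (Relation.ReflTransGen.mono (fun _ _ h => Or.symm h) u v huv) hu hv.eq_none_or.symm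
  · exact mem_A_iff_not_mem_of_reflTransGen hc' hA hB h₁ h₂ hne huv hu hv.eq_none_or
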